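/- An allocation M is the outcome of some recursively balanced policy if and only if M is Pareto optimal, M is balanced, and M satisfies Condition 3. -/

import Mathlib

open Finset
open scoped Classical

/-- The most preferred item of a nonempty finset w.r.t. a linear order
(greater means more preferred). -/
noncomputable def favorite {ι : Type} (L : LinearOrder ι) (S : Finset ι) (h : S.Nonempty) : ι :=
  @Finset.max' ι L S h

/-- Sequential allocation: process the turns in order; at each turn the agent whose
turn it is picks her most preferred item among the items not yet allocated.
Returns the list of (agent, item) picks, in order. -/
noncomputable def seqAlloc {n : ℕ} {ι : Type} [DecidableEq ι]
    (P : Fin n → LinearOrder ι) : List (Fin n) → Finset ι → List (Fin n × ι)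
  | [], _ => []
  | a :: rest, S =>
    if h : S.Nonempty then
      (a, favorite (P a) S h) :: seqAlloc P rest (S.erase (favorite (P a) S h))
    else []

/-- `M` is the outcome of the policy `π`: every item is picked by the agent that
`M` assigns it to. -/
def IsOutcome {n : ℕ} {ι : Type} [Fintype ι] [DecidableEq ι]
    (P : Fin n → LinearOrder ι) (π : List (Fin n)) (M : ι → Fin n) : Prop :=
  ∀ o : ι, (M o, o) ∈ seqAlloc P π Finset.univ

/-- The set of items that agent `a` picks under the policy `π`. -/
noncomputable def receives {n : ℕ} {ι : Type} [Fintype ι] [DecidableEq ι]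
    (P : Fin n → LinearOrder ι) (π : List (Fin n)) (a : Fin n) : Finset ι :=
  Finset.univ.filter (fun o => (a, o) ∈ seqAlloc P π Finset.univ)

/-- An allocation `M` is Pareto optimal if there is no bijection `f` of the items such
that every agent weakly prefers `f o` to `o` for each item `o` she gets, with at least
one strict preference. -/
def ParetoOptimal {n : ℕ} {ι : Type} (P : Fin n → LinearOrder ι) (M : ι → Fin n) : Prop :=
  ¬ ∃ f : ι ≃ ι, (∀ o : ι, (P (M o)).le o (f o)) ∧ (∃ o : ι, (P (M o)).lt o (f o))

/-- A policy is balanced if every agent has exactly `k` turns. -/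
def BalancedPolicy {n : ℕ} (k : ℕ) (π : List (Fin n)) : Prop :=
  ∀ a : Fin n, π.count a = k

/-- An allocation is balanced if every agent receives exactly `k` items. -/
def BalancedAlloc {n : ℕ} {ι : Type} [Fintype ι] (k : ℕ) (M : ι → Fin n) : Prop :=
  ∀ a : Fin n, (Finset.univ.filter (fun o => M o = a)).card = k

/-- A policy is recursively balanced if it splits into `k` consecutive rounds of `n`
turns each, every agent having exactly one turn in each round. -/
def RecBalanced (n k : ℕ) (π : List (Fin n)) : Prop :=
  ∃ rounds : List (List (Fin n)), rounds.length = k ∧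
    (∀ r ∈ rounds, r.length = n ∧ ∀ a : Fin n, r.count a = 1) ∧
    π = rounds.flatten

/-- A strict alternation policy: every one of the `k` rounds uses the same order `σ`
over the agents. -/
def StrictAlt (n k : ℕ) (π : List (Fin n)) : Prop :=
  ∃ σ : List (Fin n), σ.length = n ∧ (∀ a : Fin n, σ.count a = 1) ∧
    π = (List.replicate k σ).flatten

/-- A balanced alternation policy: odd-numbered rounds use the order `σ` over the agents
and even-numbered rounds use its reverse. -/
def BalAlt (n k : ℕ) (π : List (Fin n)) : Prop :=
  ∃ σ : List (Fin n), σ.length = n ∧ (∀ a : Fin n, σ.count a = 1) ∧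
    π = ((List.range k).map (fun r => if r % 2 = 0 then σ else σ.reverse)).flatten

/-- `p j i` (for `1 ≤ i ≤ k`) is the item ranked `i`-th by agent `j` among the items `M`
allocates to `j`: it is allocated to `j`, and exactly `i - 1` of the items allocated
to `j` are strictly preferred to it by agent `j`. -/
def IsRankingOf {n : ℕ} {ι : Type} [Fintype ι] (P : Fin n → LinearOrder ι) (k : ℕ)
    (M : ι → Fin n) (p : Fin n → ℕ → ι) : Prop :=
  ∀ (j : Fin n) (i : ℕ), 1 ≤ i → i ≤ k →
    M (p j i) = j ∧
    (Finset.univ.filter (fun o => M o = j ∧ (P j).lt (p j i) o)).card = i - 1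

/-- Condition 3: for all `1 ≤ t < s ≤ k` and all agents `j, j'`, agent `j` strictly
prefers `p j t` to `p j' s`. -/
def Cond3 {n : ℕ} {ι : Type} (P : Fin n → LinearOrder ι) (k : ℕ) (p : Fin n → ℕ → ι) : Prop :=
  ∀ t s : ℕ, 1 ≤ t → t < s → s ≤ k → ∀ j j' : Fin n, (P j).lt (p j' s) (p j t)

/-- The edge relation of the directed graph `G_M`: for odd `i ≤ k` an edge `a → b`
whenever `b` strictly prefers `p a i` to `p b i`, and for even `i ≤ k` an edge `a → b`
whenever `a` strictly prefers `p b i` to `p a i`. -/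
def GM {n : ℕ} {ι : Type} (P : Fin n → LinearOrder ι) (k : ℕ) (p : Fin n → ℕ → ι)
    (a b : Fin n) : Prop :=
  (∃ i : ℕ, 1 ≤ i ∧ i ≤ k ∧ i % 2 = 1 ∧ (P b).lt (p b i) (p a i)) ∨
  (∃ i : ℕ, 1 ≤ i ∧ i ≤ k ∧ i % 2 = 0 ∧ (P a).lt (p a i) (p b i))

/-- The edge relation of the directed graph `H_M`: for each `i ≤ k` an edge `a → b`
whenever `b` strictly prefers `p a i` to `p b i`. -/
def HM {n : ℕ} {ι : Type} (P : Fin n → LinearOrder ι) (k : ℕ) (p : Fin n → ℕ → ι)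
    (a b : Fin n) : Prop :=
  ∃ i : ℕ, 1 ≤ i ∧ i ≤ k ∧ (P b).lt (p b i) (p a i)

/-- The `k` most preferred items of agent `j`: those items with fewer than `k` items
strictly preferred to them by `j`. -/
noncomputable def topItems {n : ℕ} {ι : Type} [Fintype ι] (P : Fin n → LinearOrder ι)
    (k : ℕ) (j : Fin n) : Finset ι :=
  Finset.univ.filter (fun o => (Finset.univ.filter (fun o' => (P j).lt o o')).card < k)

/-- The rank of item `o` in agent `j`'s preference (the most preferred item has rank 1). -/
noncomputable def rankOf {n : ℕ} {ι : Type} [Fintype ι] (P : Fin n → LinearOrder ι)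
    (j : Fin n) (o : ι) : ℕ :=
  (Finset.univ.filter (fun o' => (P j).lt o o')).card + 1

/-!
Under a recursively balanced policy every pick is its picker's favorite among all later picks.
Hence the item an agent picks in round `i` is the `i`-th best of her bundle, she prefers it to
every item picked in a later round (Condition 3), and no exchange of items can improve anyone
without hurting someone: the first picker already holds her favorite item, and so on down the
list of picks.

Conversely, given Condition 3 it suffices to let the agents pick round by round, ordering each
round so that every agent prefers her own item of that round to those of the agents after her.
Such an order exists by Pareto optimality: if in some set of agents each preferred another's item
to her own, trading along a cycle of this relation would be a Pareto improvement.
-/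

theorem List.exists_flatten_eq_of_map_eq_flatten {α β : Type*} {f : α → β} :
    ∀ {l : List α} {ls : List (List β)}, l.map f = ls.flatten →
      ∃ Ls : List (List α), Ls.flatten = l ∧ Ls.map (List.map f) = ls
  | l, [], h => ⟨[], by simpa using h, rfl⟩
  | l, b :: bs, h => by
    obtain ⟨l₁, l₂, rfl, rfl, h₂⟩ := List.map_eq_append_iff.1 (h.trans List.flatten_cons)
    obtain ⟨Ls, rfl, rfl⟩ := List.exists_flatten_eq_of_map_eq_flatten h₂
    exact ⟨l₁ :: Ls, rfl, rfl⟩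

theorem Function.exists_mem_periodicPts {α : Type*} [Finite α] [Nonempty α] (f : α → α) :
    ∃ x, x ∈ Function.periodicPts f := by
  obtain ⟨a, b, hab, heq⟩ := Finite.exists_ne_map_eq_of_infinite
    (fun m : ℕ => f^[m] (Classical.arbitrary α))
  wlog hlt : a < b generalizing a b
  · exact this b a hab.symm heq.symm (by omega)
  refine ⟨f^[a] (Classical.arbitrary α), Function.mk_mem_periodicPts (n := b - a) (by omega) ?_⟩
  rw [Function.IsPeriodicPt, Function.IsFixedPt, ← Function.iterate_add_apply,
    Nat.sub_add_cancel hlt.le]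
  exact heq.symm

section SequentialAllocation

variable {n : ℕ} {ι : Type} (P : Fin n → LinearOrder ι)

def IsGreedy (L : List (Fin n × ι)) : Prop :=
  L.Pairwise fun x y => (P x.1).lt y.2 x.2

variable {P}

theorem favorite_mem {L : LinearOrder ι} {S : Finset ι} (h : S.Nonempty) : favorite L S h ∈ S :=
  @Finset.max'_mem ι L S h

theorem IsGreedy.nodup_map_snd {L : List (Fin n × ι)} (hL : IsGreedy P L) :
    (L.map Prod.snd).Nodup :=
  List.pairwise_map.2 <| hL.imp fun {x y} h => by
    let _ := P x.1
    exact h.ne'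

/-- The first pick is its picker's favorite among all picks, so `f` must fix it; then induct. -/
theorem IsGreedy.apply_eq_of_le {L : List (Fin n × ι)} (hL : IsGreedy P L) {f : ι → ι}
    (hf : Function.Injective f) (hmaps : ∀ x ∈ L, f x.2 ∈ L.map Prod.snd)
    (hle : ∀ x ∈ L, (P x.1).le x.2 (f x.2)) : ∀ x ∈ L, f x.2 = x.2 := by
  induction L with
  | nil => simp
  | cons x L ih =>
    obtain ⟨hx, hL'⟩ := List.pairwise_cons.1 hL
    have hfx : f x.2 = x.2 := by
      have h := hmaps x List.mem_cons_self
      simp only [List.map_cons, List.mem_cons, List.mem_map] at h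
      rcases h with h | ⟨y, hy, h⟩
      · exact h
      · let _ := P x.1
        exact absurd (h ▸ hle x List.mem_cons_self) (hx y hy).not_ge
    refine List.forall_mem_cons.2 ⟨hfx, ih hL' (fun y hy => ?_) fun y hy => hle y (by simp [hy])⟩
    have h := hmaps y (List.mem_cons_of_mem x hy)
    rw [List.map_cons, List.mem_cons] at h
    rcases h with h | h
    · rw [← hfx] at h
      let _ := P x.1
      exact absurd (hf h ▸ hx y hy) (lt_irrefl _)
    · exact h

variable [DecidableEq ι]

theorem seqAlloc_cons_of_nonempty (a : Fin n) (π : List (Fin n)) {S : Finset ι}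
    (h : S.Nonempty) :
    seqAlloc P (a :: π) S =
      (a, favorite (P a) S h) :: seqAlloc P π (S.erase (favorite (P a) S h)) := by
  simp [seqAlloc, h]

theorem snd_mem_of_mem_seqAlloc {π : List (Fin n)} {S : Finset ι} {x : Fin n × ι}
    (hx : x ∈ seqAlloc P π S) : x.2 ∈ S := by
  induction π generalizing S with
  | nil => simp [seqAlloc] at hx
  | cons a π ih =>
    by_cases h : S.Nonempty
    · rw [seqAlloc_cons_of_nonempty a π h, List.mem_cons] at hx
      rcases hx with rfl | hx
      · exact favorite_mem h
      · exact Finset.mem_of_mem_erase (ih hx)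
    · simp [seqAlloc, h] at hx

theorem isGreedy_seqAlloc (π : List (Fin n)) (S : Finset ι) : IsGreedy P (seqAlloc P π S) := by
  induction π generalizing S with
  | nil => simp [seqAlloc, IsGreedy]
  | cons a π ih =>
    by_cases h : S.Nonempty
    · rw [seqAlloc_cons_of_nonempty a π h]
      refine List.Pairwise.cons (fun y hy => ?_) (ih _)
      obtain ⟨hne, hyS⟩ := Finset.mem_erase.1 (snd_mem_of_mem_seqAlloc hy)
      let _ := P a
      exact lt_of_le_of_ne (Finset.le_max' S y.2 hyS) hne
    · simp [seqAlloc, h, IsGreedy]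

theorem map_fst_seqAlloc {π : List (Fin n)} {S : Finset ι} (h : π.length ≤ S.card) :
    (seqAlloc P π S).map Prod.fst = π := by
  induction π generalizing S with
  | nil => simp [seqAlloc]
  | cons a π ih =>
    have hS : S.Nonempty := Finset.card_pos.1 (by simp at h; omega)
    rw [seqAlloc_cons_of_nonempty a π hS, List.map_cons,
      ih (by rw [Finset.card_erase_of_mem (favorite_mem hS)]; simp at h; omega)]

theorem IsGreedy.seqAlloc_eq {L : List (Fin n × ι)} (hL : IsGreedy P L) :
    seqAlloc P (L.map Prod.fst) (L.map Prod.snd).toFinset = L := by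
  induction L with
  | nil => simp [seqAlloc]
  | cons x L ih =>
    obtain ⟨hx, hL'⟩ := List.pairwise_cons.1 hL
    have hS : (x :: L).map Prod.snd |>.toFinset.Nonempty := ⟨x.2, by simp⟩
    have hfav : favorite (P x.1) _ hS = x.2 := by
      let _ := P x.1
      refine le_antisymm (Finset.max'_le _ _ _ fun o ho => ?_) (Finset.le_max' _ _ (by simp))
      simp only [List.map_cons, List.toFinset_cons, Finset.mem_insert, List.mem_toFinset,
        List.mem_map] at ho
      rcases ho with rfl | ⟨y, hy, rfl⟩
      exacts [le_rfl, (hx y hy).le]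
    have herase : ((x :: L).map Prod.snd).toFinset.erase x.2 = (L.map Prod.snd).toFinset := by
      rw [List.map_cons, List.toFinset_cons, Finset.erase_insert]
      exact List.mem_toFinset.not.2 (List.nodup_cons.1 hL.nodup_map_snd).1
    rw [List.map_cons, seqAlloc_cons_of_nonempty _ _ hS, hfav, herase, ih hL']

variable [Fintype ι] {π : List (Fin n)} {M : ι → Fin n}

theorem IsOutcome.eq_of_mem (hout : IsOutcome P π M) {j : Fin n} {o : ι}
    (h : (j, o) ∈ seqAlloc P π Finset.univ) : M o = j :=
  congrArg Prod.fst <|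
    List.inj_on_of_nodup_map (isGreedy_seqAlloc π _).nodup_map_snd (hout o) h rfl

theorem IsOutcome.paretoOptimal (hout : IsOutcome P π M) : ParetoOptimal P M := by
  rintro ⟨f, hle, o, hlt⟩
  have hfix := (isGreedy_seqAlloc (P := P) π Finset.univ).apply_eq_of_le f.injective
    (fun x _ => List.mem_map.2 ⟨_, hout (f x.2), rfl⟩)
    (fun x hx => hout.eq_of_mem (j := x.1) (o := x.2) hx ▸ hle x.2) _ (hout o)
  let _ := P (M o)
  exact hlt.ne' hfix

end SequentialAllocation

section RoundAssignment

variable {n k : ℕ} {ι : Type} {P : Fin n → LinearOrder ι} {M : ι → Fin n}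

variable (P M) in
/-- `q j i` is the item agent `j` receives in round `i` (rounds counted from `0`). -/
structure IsRoundAssignment (q : Fin n → Fin k → ι) : Prop where
  owner : ∀ j i, M (q j i) = j
  exhaustive : ∀ o, ∃ i, q (M o) i = o
  later_lt : ∀ j j' {t s : Fin k}, t < s → (P j).lt (q j' s) (q j t)

namespace IsRoundAssignment

variable {q : Fin n → Fin k → ι} (hq : IsRoundAssignment P M q)
include hq

theorem le_of_le (j : Fin n) {t s : Fin k} (hts : t ≤ s) : (P j).le (q j s) (q j t) := by
  let _ := P j
  rcases hts.lt_or_eq with hts | rfl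
  exacts [(hq.later_lt j j hts).le, le_rfl]

theorem injective (j : Fin n) : Function.Injective (q j) := by
  let _ := P j
  intro t s h
  by_contra hne
  rcases lt_or_gt_of_ne hne with hts | hst
  exacts [(hq.later_lt j j hts).ne' h, (hq.later_lt j j hst).ne h]

end IsRoundAssignment

theorem IsGreedy.exists_isRoundAssignment {Bs : List (List (Fin n × ι))}
    (hgreedy : IsGreedy P Bs.flatten) (hblocks : ∀ B ∈ Bs, ∀ j, (B.map Prod.fst).count j = 1)
    (hM : ∀ o, (M o, o) ∈ Bs.flatten) :
    ∃ q : Fin n → Fin Bs.length → ι, IsRoundAssignment P M q := by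
  have hpick : ∀ j (i : Fin Bs.length), ∃ o, (j, o) ∈ Bs[i] := by
    intro j i
    obtain ⟨x, hx, rfl⟩ := List.mem_map.1 <| List.count_pos_iff.1 <|
      (hblocks _ (List.getElem_mem _) j).symm ▸ Nat.one_pos
    exact ⟨x.2, hx⟩
  choose q hq using hpick
  refine ⟨q, fun j i => ?_, fun o => ?_, fun j j' t s hts => ?_⟩
  · exact congrArg Prod.fst <| List.inj_on_of_nodup_map hgreedy.nodup_map_snd (hM _)
      (List.mem_flatten_of_mem (List.getElem_mem _) (hq j i)) rfl
  · obtain ⟨B, hB, hoB⟩ := List.mem_flatten.1 (hM o)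
    obtain ⟨i, hi, rfl⟩ := List.getElem_of_mem hB
    have hnodup : (Bs[i].map Prod.fst).Nodup :=
      List.nodup_iff_count_le_one.2 fun j => (hblocks _ hB j).le
    exact ⟨⟨i, hi⟩, congrArg Prod.snd (List.inj_on_of_nodup_map hnodup (hq (M o) ⟨i, hi⟩) hoB rfl)⟩
  · exact List.pairwise_iff_getElem.1 (List.pairwise_flatten.1 hgreedy).2 t s t.2 s.2 hts
      _ (hq j t) _ (hq j' s)

variable [Fintype ι]

theorem IsOutcome.exists_isRoundAssignment [DecidableEq ι] {π : List (Fin n)}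
    (hout : IsOutcome P π M) (hπ : RecBalanced n k π) (hcard : Fintype.card ι = k * n) :
    ∃ q : Fin n → Fin k → ι, IsRoundAssignment P M q := by
  obtain ⟨rounds, rfl, hrounds, rfl⟩ := hπ
  have hlen : rounds.flatten.length ≤ (Finset.univ : Finset ι).card := by
    rw [List.length_flatten, List.sum_eq_card_nsmul _ n, Finset.card_univ, hcard]
    · simp
    · simp only [List.mem_map]
      rintro _ ⟨r, hr, rfl⟩
      exact (hrounds r hr).1
  obtain ⟨Bs, hBs, rfl⟩ := List.exists_flatten_eq_of_map_eq_flatten (map_fst_seqAlloc (P := P) hlen)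
  rw [List.length_map]
  exact IsGreedy.exists_isRoundAssignment (hBs ▸ isGreedy_seqAlloc _ _)
    (fun B hB => (hrounds _ (List.mem_map_of_mem hB)).2) (fun o => hBs ▸ hout o)

variable (P M) in
/-- Counted from `0`: the item `p j i` of `IsRankingOf` has `bundleRank` `i - 1`. -/
noncomputable def bundleRank (j : Fin n) (o : ι) : ℕ :=
  (Finset.univ.filter fun o' => M o' = j ∧ (P j).lt o o').card

theorem bundleRank_lt_bundleRank {j : Fin n} {x y : ι} (hy : M y = j) (h : (P j).lt x y) :
    bundleRank P M j y < bundleRank P M j x := by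
  let _ := P j
  refine Finset.card_lt_card ⟨fun o ho => ?_, fun hsub => ?_⟩
  · simp only [Finset.mem_filter, Finset.mem_univ, true_and] at ho ⊢
    exact ⟨ho.1, h.trans ho.2⟩
  · have := hsub (Finset.mem_filter.2 ⟨Finset.mem_univ y, hy, h⟩)
    exact lt_irrefl y (Finset.mem_filter.1 this).2.2

theorem eq_of_bundleRank_eq {j : Fin n} {x y : ι} (hx : M x = j) (hy : M y = j)
    (h : bundleRank P M j x = bundleRank P M j y) : x = y := by
  let _ := P j
  rcases lt_trichotomy x y with hlt | heq | hlt
  · exact absurd h (bundleRank_lt_bundleRank hy hlt).ne'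
  · exact heq
  · exact absurd h (bundleRank_lt_bundleRank hx hlt).ne

theorem bundleRank_lt {j : Fin n} {o : ι} (hbal : BalancedAlloc k M) (ho : M o = j) :
    bundleRank P M j o < k := by
  let _ := P j
  have hsub : (Finset.univ.filter fun o' => M o' = j ∧ o < o') ⊆
      (Finset.univ.filter fun o' => M o' = j).erase o := fun o' h' => by
    simp only [Finset.mem_filter, Finset.mem_univ, true_and, Finset.mem_erase] at h' ⊢
    exact ⟨h'.2.ne', h'.1⟩
  have hmem : o ∈ Finset.univ.filter fun o' => M o' = j := by simp [ho]
  have := Finset.card_le_card hsub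
  rw [Finset.card_erase_of_mem hmem, hbal j] at this
  have := Finset.card_pos.2 ⟨o, hmem⟩
  rw [hbal j] at this
  unfold bundleRank
  omega

namespace IsRoundAssignment

variable {q : Fin n → Fin k → ι} (hq : IsRoundAssignment P M q)
include hq

theorem bundle_eq (j : Fin n) :
    (Finset.univ.filter fun o => M o = j) = Finset.univ.image (q j) := by
  ext o
  simp only [Finset.mem_filter, Finset.mem_univ, true_and, Finset.mem_image]
  refine ⟨?_, fun ⟨i, hi⟩ => hi ▸ hq.owner j i⟩
  rintro rfl
  exact hq.exhaustive o

theorem balancedAlloc : BalancedAlloc k M := fun j => by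
  rw [hq.bundle_eq j, Finset.card_image_of_injective _ (hq.injective j), Finset.card_univ,
    Fintype.card_fin]

theorem bundleRank_apply (j : Fin n) (i : Fin k) : bundleRank P M j (q j i) = i := by
  let _ := P j
  have hset : (Finset.univ.filter fun o => M o = j ∧ q j i < o) = (Finset.Iio i).image (q j) := by
    ext o
    simp only [Finset.mem_filter, Finset.mem_univ, true_and, Finset.mem_image, Finset.mem_Iio]
    constructor
    · rintro ⟨hMo, hlt⟩
      obtain ⟨t, ht⟩ := hq.exhaustive o
      rw [hMo] at ht
      subst ht
      exact ⟨t, lt_of_not_ge fun hit => (hq.le_of_le _ hit).not_gt hlt, rfl⟩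
    · rintro ⟨t, hti, rfl⟩
      exact ⟨hq.owner j t, hq.later_lt j j hti⟩
  rw [bundleRank, hset, Finset.card_image_of_injective _ (hq.injective j), Fin.card_Iio]

theorem cond3 {p : Fin n → ℕ → ι} (hp : IsRankingOf P k M p) : Cond3 P k p := by
  have hpq : ∀ j i (h₁ : 1 ≤ i) (h₂ : i ≤ k), p j i = q j ⟨i - 1, by omega⟩ := by
    intro j i h₁ h₂
    obtain ⟨hown, hrank⟩ := hp j i h₁ h₂
    obtain ⟨t, ht⟩ := hq.exhaustive (p j i)
    rw [hown] at ht
    have hti : (t : ℕ) = i - 1 := by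
      rw [← hq.bundleRank_apply j t, ht]
      exact hrank
    rw [← ht]
    exact congrArg (q j) (Fin.ext hti)
  intro t s ht hts hs j j'
  rw [hpq j t ht (by omega), hpq j' s (by omega) hs]
  exact hq.later_lt j j' (Fin.mk_lt_mk.2 (by omega))

end IsRoundAssignment

theorem exists_isRoundAssignment_of_cond3 (hbal : BalancedAlloc k M)
    (hC3 : ∀ p : Fin n → ℕ → ι, IsRankingOf P k M p → Cond3 P k p) :
    ∃ q : Fin n → Fin k → ι, IsRoundAssignment P M q := by
  have hsorted : ∀ j (i : Fin k), ∃ o, M o = j ∧ bundleRank P M j o = i := by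
    intro j i
    obtain ⟨o, ho, hrank⟩ := Finset.surj_on_of_inj_on_of_card_le
      (s := Finset.univ.filter fun o => M o = j) (t := Finset.range k)
      (fun o _ => bundleRank P M j o)
      (fun o ho => Finset.mem_range.2 (bundleRank_lt hbal (Finset.mem_filter.1 ho).2))
      (fun o₁ o₂ h₁ h₂ => eq_of_bundleRank_eq (Finset.mem_filter.1 h₁).2 (Finset.mem_filter.1 h₂).2)
      (by rw [Finset.card_range, hbal j]) i (Finset.mem_range.2 i.2)
    exact ⟨o, (Finset.mem_filter.1 ho).2, hrank.symm⟩
  choose q hown hrank using hsorted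
  refine ⟨q, hown, fun o => ?_, fun j j' t s hts => ?_⟩
  · exact ⟨⟨bundleRank P M (M o) o, bundleRank_lt hbal rfl⟩,
      eq_of_bundleRank_eq (hown _ _) rfl (hrank _ _)⟩
  · let p : Fin n → ℕ → ι := fun j i => q j ⟨min (i - 1) (k - 1), by have := t.2; omega⟩
    have hp : IsRankingOf P k M p := fun j i h₁ h₂ =>
      ⟨hown _ _, (hrank _ _).trans (by simp; omega)⟩
    have hpq : ∀ j (i : Fin k), p j (i + 1) = q j i := fun j i =>
      congrArg (q j) (Fin.ext (by simp; omega))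
    simpa only [hpq] using hC3 p hp (t + 1) (s + 1) (by omega) (by simpa using hts)
      (by omega) j j'

end RoundAssignment

section Pareto

variable {n : ℕ} {ι : Type} {M : ι → Fin n}

open Function

variable (M) in
noncomputable def tradeAlongCycles (g : Fin n → ι) (s : Fin n → Fin n) (o : ι) : ι :=
  if M o ∈ periodicPts s ∧ g (M o) = o then g (s (M o)) else o

theorem tradeAlongCycles_injective {g : Fin n → ι} (hg : ∀ j, M (g j) = j) (s : Fin n → Fin n) :
    Injective (tradeAlongCycles M g s) := by
  have hnext : ∀ j ∈ periodicPts s, M (g (s j)) ∈ periodicPts s ∧ g (M (g (s j))) = g (s j) :=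
    fun j hj => by rw [hg]; exact ⟨(bijOn_periodicPts s).mapsTo hj, rfl⟩
  intro o₁ o₂ h
  unfold tradeAlongCycles at h
  split_ifs at h with h₁ h₂ h₂
  · have hM := congrArg M h
    rw [hg, hg] at hM
    rw [← h₁.2, ← h₂.2, (bijOn_periodicPts s).injOn h₁.1 h₂.1 hM]
  · exact absurd (h ▸ hnext _ h₁.1) h₂
  · exact absurd (h ▸ hnext _ h₂.1) h₁
  · exact h

variable [Fintype ι] {P : Fin n → LinearOrder ι}

/-- Otherwise trading along the cycles of `s` is a Pareto improvement. -/
theorem ParetoOptimal.eq_of_mem_periodicPts (hPO : ParetoOptimal P M) {g : Fin n → ι}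
    (hg : ∀ j, M (g j) = j) {s : Fin n → Fin n}
    (hs : ∀ j ∈ periodicPts s, (P j).le (g j) (g (s j))) {j : Fin n} (hj : j ∈ periodicPts s) :
    s j = j := by
  by_contra hne
  let f := Equiv.ofBijective _ (Finite.injective_iff_bijective.1 (tradeAlongCycles_injective hg s))
  refine hPO ⟨f, fun o => ?_, g j, ?_⟩
  · simp only [f, Equiv.ofBijective_apply, tradeAlongCycles]
    split_ifs with ho
    · have := hs _ ho.1
      rwa [ho.2] at this
    · exact (P (M o)).le_refl o
  · have hfj : f (g j) = g (s j) := by simp [f, tradeAlongCycles, hg, hj]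
    rw [hfj, hg]
    let _ := P j
    exact lt_of_le_of_ne (hs j hj) fun h => hne (by simpa [hg] using congrArg M h.symm)

theorem ParetoOptimal.exists_forall_le (hPO : ParetoOptimal P M) {g : Fin n → ι}
    (hg : ∀ j, M (g j) = j) {A : Finset (Fin n)} (hA : A.Nonempty) :
    ∃ j ∈ A, ∀ j' ∈ A, (P j).le (g j') (g j) := by
  choose s hsA hsmax using fun j => @Finset.exists_max_image _ _ (P j) A g hA
  replace hsmax : ∀ j, ∀ j' ∈ A, (P j).le (g j') (g (s j)) := hsmax
  have : Nonempty (Fin n) := ⟨hA.choose⟩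
  obtain ⟨y, hy⟩ := exists_mem_periodicPts s
  have hper : ∀ j ∈ periodicPts s, j ∈ A := fun j hj => by
    obtain ⟨x, rfl⟩ := periodicPts_subset_range hj
    exact hsA x
  have hfix := hPO.eq_of_mem_periodicPts hg (fun j hj => hsmax j j (hper j hj)) hy
  refine ⟨y, hper y hy, fun j' hj' => ?_⟩
  have := hsmax y j' hj'
  rwa [hfix] at this

theorem ParetoOptimal.exists_pickingOrder (hPO : ParetoOptimal P M) {g : Fin n → ι}
    (hg : ∀ j, M (g j) = j) :
    ∃ τ : List (Fin n), τ.toFinset = Finset.univ ∧ τ.Pairwise fun a b => (P a).lt (g b) (g a) := by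
  suffices ∀ A : Finset (Fin n), ∃ τ : List (Fin n),
      τ.toFinset = A ∧ τ.Pairwise fun a b => (P a).lt (g b) (g a) from this _
  intro A
  induction A using Finset.strongInduction with
  | H A ih =>
    rcases A.eq_empty_or_nonempty with rfl | hA
    · exact ⟨[], rfl, List.Pairwise.nil⟩
    obtain ⟨j, hj, hbest⟩ := hPO.exists_forall_le hg hA
    obtain ⟨τ, hτ, hpw⟩ := ih (A.erase j) (Finset.erase_ssubset hj)
    refine ⟨j :: τ, by rw [List.toFinset_cons, hτ, Finset.insert_erase hj],
      List.Pairwise.cons (fun j' hj' => ?_) hpw⟩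
    obtain ⟨hne, hj'A⟩ := Finset.mem_erase.1 (hτ ▸ List.mem_toFinset.2 hj')
    let _ := P j
    exact lt_of_le_of_ne (hbest j' hj'A) fun h => hne (by simpa [hg] using congrArg M h)

end Pareto

theorem IsRoundAssignment.exists_recBalanced_isOutcome {n k : ℕ} {ι : Type} [Fintype ι]
    [DecidableEq ι] {P : Fin n → LinearOrder ι} {M : ι → Fin n} {q : Fin n → Fin k → ι}
    (hq : IsRoundAssignment P M q) (hPO : ParetoOptimal P M) :
    ∃ π : List (Fin n), RecBalanced n k π ∧ IsOutcome P π M := by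
  choose σ hσ using fun i : Fin k => hPO.exists_pickingOrder (g := fun j => q j i) (hq.owner · i)
  have hnodup : ∀ i, (σ i).Nodup := fun i => (hσ i).2.imp fun {a b} h hab => by
    subst hab
    let _ := P a
    exact lt_irrefl _ h
  let L := (List.finRange k).flatMap fun i => (σ i).map fun j => (j, q j i)
  have hL : IsGreedy P L := by
    refine List.pairwise_flatMap.2 ⟨fun i _ => List.pairwise_map.2 (hσ i).2,
      (List.pairwise_lt_finRange k).imp fun {t s} hts x hx y hy => ?_⟩
    obtain ⟨a, -, rfl⟩ := List.mem_map.1 hx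
    obtain ⟨b, -, rfl⟩ := List.mem_map.1 hy
    exact hq.later_lt a b hts
  have hmem : ∀ o, (M o, o) ∈ L := fun o => by
    obtain ⟨i, hi⟩ := hq.exhaustive o
    refine List.mem_flatMap.2 ⟨i, List.mem_finRange i, List.mem_map.2 ⟨M o, ?_, by rw [hi]⟩⟩
    exact List.mem_toFinset.1 ((hσ i).1 ▸ Finset.mem_univ _)
  have huniv : (L.map Prod.snd).toFinset = Finset.univ :=
    Finset.eq_univ_of_forall fun o => List.mem_toFinset.2 (List.mem_map.2 ⟨_, hmem o, rfl⟩)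
  refine ⟨L.map Prod.fst, ⟨(List.finRange k).map σ, by simp, fun r hr => ?_, ?_⟩, fun o => ?_⟩
  · obtain ⟨i, -, rfl⟩ := List.mem_map.1 hr
    refine ⟨?_, fun j => List.count_eq_one_of_mem (hnodup i) ?_⟩
    · rw [← List.toFinset_card_of_nodup (hnodup i), (hσ i).1, Finset.card_univ, Fintype.card_fin]
    · exact List.mem_toFinset.1 ((hσ i).1 ▸ Finset.mem_univ _)
  · simp [L, List.flatMap_def, Function.comp_def]
  · show (M o, o) ∈ seqAlloc P (L.map Prod.fst) Finset.univ
    rw [← huniv, hL.seqAlloc_eq]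
    exact hmem o

theorem possible_assignment_recursively_balanced_general
    {ι : Type} [Fintype ι] [DecidableEq ι] {n k : ℕ}
    (hcard : Fintype.card ι = k * n)
    (P : Fin n → LinearOrder ι) (M : ι → Fin n) :
    (∃ π : List (Fin n), RecBalanced n k π ∧ IsOutcome P π M) ↔
      ParetoOptimal P M ∧ BalancedAlloc k M ∧
        ∀ p : Fin n → ℕ → ι, IsRankingOf P k M p → Cond3 P k p := by
  constructor
  · rintro ⟨π, hπ, hout⟩
    obtain ⟨q, hq⟩ := hout.exists_isRoundAssignment hπ hcard
    exact ⟨hout.paretoOptimal, hq.balancedAlloc, fun p => hq.cond3⟩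
  · rintro ⟨hPO, hbal, hC3⟩
    obtain ⟨q, hq⟩ := exists_isRoundAssignment_of_cond3 hbal hC3
    exact hq.exists_recBalanced_isOutcome hPO

/-- An allocation `M` is the outcome of some recursively balanced policy if
and only if `M` is Pareto optimal, balanced, and satisfies Condition 3. -/
theorem possible_assignment_recursively_balanced
    {ι : Type} [Fintype ι] [DecidableEq ι] {n k : ℕ} (hn : 0 < n) (hk : 1 ≤ k)
    (hcard : Fintype.card ι = k * n)
    (P : Fin n → LinearOrder ι) (M : ι → Fin n) :
    (∃ π : List (Fin n), RecBalanced n k π ∧ IsOutcome P π M) ↔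
      ParetoOptimal P M ∧ BalancedAlloc k M ∧
        ∀ p : Fin n → ℕ → ι, IsRankingOf P k M p → Cond3 P k p :=
  possible_assignment_recursively_balanced_general hcard P M
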